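/- arXiv:1302.4129 — 2 statements merged into one kernel-verified Lean document; each statement's English description precedes it below -/
import Mathlib

section
/- (Expected update measure) Let k ≥ 3 be odd. For (i,j) ∈ {0,…,2^{k−1}−1} × {0,…,k−1}, the number of parity elements that must be updated when a_{i,j} changes is u(i,j) = 1 + |{m ∈ {0,…,2^{k−1}−1} : (i,j) ∈ B_m}| (one horizontal element plus the butterfly elements whose support set contains (i,j)). Then Σ_{i=0}^{2^{k−1}−1} Σ_{j=0}^{k−1} u(i,j) = k · 2^{k−2} · (⌊k/2⌋ + 4); equivalently, the average of u(i,j) over all (i,j) equals ⌊k/2⌋/2 + 2. -/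
/-- The `j`-th bit of `i` (`j ≥ 0`). -/
def bitp (i j : ℕ) : Bool := i.testBit j

/-- The `(j-1)`-th bit of `i`, with the convention that the bit at position `-1` is `0`. -/
def bitm (i j : ℕ) : Bool := if j = 0 then false else i.testBit (j - 1)

/-- `i` is dark in column `j` iff `i(j) = i(j-1)`. -/
def dark (i j : ℕ) : Prop := bitp i j = bitm i j

instance (i j : ℕ) : Decidable (dark i j) := by unfold dark; infer_instance

/-- `ℓ_{i,j} = i ⊕ (2^j - 1)`. -/
def ell (i j : ℕ) : ℕ := i ^^^ (2 ^ j - 1)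

/-- The set `B_{i,j}`. -/
def Bset (k i j : ℕ) : Finset (ℕ × ℕ) :=
  if dark i j then
    ((Finset.range k).filter
        (fun j' : ℕ => ((j : ℤ) - (j' : ℤ)) % (k : ℤ) ≤ ((k / 2 : ℕ) : ℤ))).image
      (fun j' => (i, j'))
  else {(i, j)}

/-- The butterfly support set `B_i = ⋃_{j ∈ [k]} B_{ℓ_{i,j}, j}`. -/
def Bline (k i : ℕ) : Finset (ℕ × ℕ) :=
  (Finset.range k).biUnion (fun j => Bset k (ell i j) j)

/-- Horizontal parity `h_i(a)`. -/
def hpar (k : ℕ) (a : ℕ → ℕ → ZMod 2) (i : ℕ) : ZMod 2 :=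
  ∑ j ∈ Finset.range k, a i j

/-- Butterfly parity `b_i(a)`. -/
def bpar (k : ℕ) (a : ℕ → ℕ → ZMod 2) (i : ℕ) : ZMod 2 :=
  ∑ p ∈ Bline k i, a p.1 p.2

/-- The number of parity elements updated when `a_{i,j}` changes: one horizontal element
plus the butterfly elements whose support set contains `(i,j)`. -/
def ucount (k i j : ℕ) : ℕ :=
  1 + ((Finset.range (2 ^ (k - 1))).filter (fun m => (i, j) ∈ Bline k m)).card

/-!
Count the incidences from the other side: the butterfly part of the total is `∑ m, |B_m|`.
The pieces `B_{ℓ_{m,j}, j}` of `B_m` lie in the distinct rows `ℓ_{m,j}`, so they are disjoint,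
and a piece has `⌊k/2⌋ + 1` elements (the window `(j - j') mod k ≤ ⌊k/2⌋`, as `j' ↦ (j - j') mod k`
permutes the columns) or `1` according as row `ℓ_{m,j}` is dark in column `j` or not. For fixed
`j`, flipping bit `j - 1` of `m` toggles darkness of `ℓ_{m,j}`, so exactly half of the `2^(k-1)`
rows `m` are dark there. Hence `∑ m, |B_m| = k · 2^(k-2) · (⌊k/2⌋ + 2)`, and the `k · 2^(k-1)`
horizontal updates make up the rest.
-/

open Finset

lemma card_filter_range_emod_sub {k : ℕ} (hk : 0 < k) (j : ℤ) (p : ℤ → Prop) [DecidablePred p] :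
    #((range k).filter fun j' : ℕ => p ((j - j') % k)) = #((range k).filter fun r : ℕ => p r) := by
  set f : ℕ → ℕ := fun x => ((j - x) % k).toNat
  have hf_cast (x : ℕ) : (f x : ℤ) = (j - x) % k :=
    Int.toNat_of_nonneg (Int.emod_nonneg _ (by omega))
  have hf_lt (x : ℕ) : f x < k := by
    have := Int.emod_lt_of_pos (j - x) (by omega : (0 : ℤ) < k)
    have := hf_cast x
    omega
  have hf_invol (x : ℕ) (hx : x < k) : f (f x) = x := by
    have : (f (f x) : ℤ) = x := by
      rw [hf_cast, hf_cast, Int.sub_emod_emod, sub_sub_cancel,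
        Int.emod_eq_of_lt (by omega) (by omega)]
    omega
  refine card_nbij' f f ?_ ?_ ?_ ?_
  · intro x hx
    simp only [coe_filter, mem_range, Set.mem_ofPred_eq] at hx ⊢
    exact ⟨hf_lt x, hf_cast x ▸ hx.2⟩
  · intro r hr
    simp only [coe_filter, mem_range, Set.mem_ofPred_eq] at hr ⊢
    exact ⟨hf_lt r, by rw [← hf_cast, hf_invol r hr.1]; exact hr.2⟩
  · intro x hx
    exact hf_invol x (mem_range.mp (mem_filter.mp hx).1)
  · intro r hr
    exact hf_invol r (mem_range.mp (mem_filter.mp hr).1)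

lemma card_Bset {k : ℕ} (hk : 0 < k) (i j : ℕ) :
    #(Bset k i j) = if dark i j then k / 2 + 1 else 1 := by
  unfold Bset
  split_ifs
  · rw [card_image_of_injective _ (fun a b h => (Prod.mk.inj h).2),
      card_filter_range_emod_sub hk j (· ≤ ((k / 2 : ℕ) : ℤ))]
    have : ((range k).filter fun r : ℕ => (r : ℤ) ≤ ((k / 2 : ℕ) : ℤ)) = range (k / 2 + 1) := by
      ext r
      simp only [mem_filter, mem_range]
      omega
    rw [this, card_range]
  · rfl

lemma fst_eq_of_mem_Bset {k i j : ℕ} {p : ℕ × ℕ} (hp : p ∈ Bset k i j) : p.1 = i := by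
  unfold Bset at hp
  split_ifs at hp
  · obtain ⟨j', -, rfl⟩ := mem_image.mp hp
    rfl
  · rw [mem_singleton.mp hp]

lemma snd_lt_of_mem_Bset {k i j : ℕ} {p : ℕ × ℕ} (hp : p ∈ Bset k i j) (hj : j < k) :
    p.2 < k := by
  unfold Bset at hp
  split_ifs at hp
  · obtain ⟨j', hj', rfl⟩ := mem_image.mp hp
    exact mem_range.mp (mem_filter.mp hj').1
  · rwa [mem_singleton.mp hp]

lemma ell_injective (m : ℕ) : Function.Injective (ell m) := by
  intro a b h
  have h' : 2 ^ a - 1 = 2 ^ b - 1 := Nat.xor_right_injective h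
  have := Nat.one_le_two_pow (n := a)
  have := Nat.one_le_two_pow (n := b)
  exact Nat.pow_right_injective le_rfl (show 2 ^ a = 2 ^ b by omega)

lemma ell_lt_two_pow {n m j : ℕ} (hm : m < 2 ^ n) (hj : j ≤ n) : ell m j < 2 ^ n :=
  Nat.xor_lt_two_pow hm (lt_of_lt_of_le (Nat.sub_lt (Nat.two_pow_pos j) one_pos)
    (Nat.pow_le_pow_right two_pos hj))

lemma ell_xor (m x j : ℕ) : ell (m ^^^ x) j = ell m j ^^^ x := by
  unfold ell
  rw [Nat.xor_assoc, Nat.xor_comm x, ← Nat.xor_assoc]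

lemma card_Bline (k m : ℕ) : #(Bline k m) = ∑ j ∈ range k, #(Bset k (ell m j) j) := by
  refine card_biUnion fun a _ b _ hab => disjoint_left.mpr fun p hpa hpb => hab ?_
  exact ell_injective m ((fst_eq_of_mem_Bset hpa).symm.trans (fst_eq_of_mem_Bset hpb))

lemma Bline_subset_range_product {k m : ℕ} (hm : m < 2 ^ (k - 1)) :
    Bline k m ⊆ range (2 ^ (k - 1)) ×ˢ range k := by
  intro p hp
  obtain ⟨j, hj, hp⟩ := mem_biUnion.mp hp
  have hjk := mem_range.mp hj
  exact mem_product.mpr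
    ⟨mem_range.mpr ((fst_eq_of_mem_Bset hp).symm ▸ ell_lt_two_pow hm (by omega)),
      mem_range.mpr (snd_lt_of_mem_Bset hp hjk)⟩

/-- At `j = 0` the truncated `j - 1` is `0`, which is the bit to flip there as well. -/
lemma dark_xor_two_pow_pred_iff (i j : ℕ) : dark (i ^^^ 2 ^ (j - 1)) j ↔ ¬ dark i j := by
  unfold dark bitp bitm
  rcases Nat.eq_zero_or_pos j with rfl | hj
  · simp only [zero_tsub, Nat.testBit_xor, Nat.testBit_two_pow_self, ↓reduceIte]
    cases i.testBit 0 <;> decide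
  · simp only [Nat.testBit_xor, Nat.testBit_two_pow_of_ne (show j - 1 ≠ j by omega),
      Nat.testBit_two_pow_self, hj.ne', ↓reduceIte, Bool.bne_false, Bool.bne_true]
    cases i.testBit j <;> cases i.testBit (j - 1) <;> decide

lemma two_pow_pred_eq_two_mul {k : ℕ} (hk : 2 ≤ k) : 2 ^ (k - 1) = 2 * 2 ^ (k - 2) := by
  rw [← pow_succ']
  congr 1
  omega

lemma card_filter_dark_ell_eq_card_filter_not_dark {k j : ℕ} (hk : 2 ≤ k) (hj : j < k) :
    #{m ∈ range (2 ^ (k - 1)) | dark (ell m j) j} =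
      #{m ∈ range (2 ^ (k - 1)) | ¬ dark (ell m j) j} := by
  have hflip_mem (m : ℕ) (hm : m < 2 ^ (k - 1)) : m ^^^ 2 ^ (j - 1) < 2 ^ (k - 1) :=
    Nat.xor_lt_two_pow hm (Nat.pow_lt_pow_right one_lt_two (by omega))
  refine card_nbij' (· ^^^ 2 ^ (j - 1)) (· ^^^ 2 ^ (j - 1)) ?_ ?_ ?_ ?_
  · intro m hm
    simp only [coe_filter, mem_range, Set.mem_ofPred_eq] at hm ⊢
    rw [ell_xor, dark_xor_two_pow_pred_iff, not_not]
    exact ⟨hflip_mem m hm.1, hm.2⟩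
  · intro m hm
    simp only [coe_filter, mem_range, Set.mem_ofPred_eq] at hm ⊢
    rw [ell_xor, dark_xor_two_pow_pred_iff]
    exact ⟨hflip_mem m hm.1, hm.2⟩
  · intro m _
    exact Nat.xor_xor_cancel_right m _
  · intro m _
    exact Nat.xor_xor_cancel_right m _

lemma sum_range_ite_dark_ell {k j : ℕ} (hk : 2 ≤ k) (hj : j < k) (a b : ℕ) :
    ∑ m ∈ range (2 ^ (k - 1)), (if dark (ell m j) j then a else b) = 2 ^ (k - 2) * (a + b) := by
  have hswap := card_filter_dark_ell_eq_card_filter_not_dark hk hj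
  have hhalf : #{m ∈ range (2 ^ (k - 1)) | dark (ell m j) j} = 2 ^ (k - 2) := by
    have htotal := card_filter_add_card_filter_not (s := range (2 ^ (k - 1)))
      (fun m => dark (ell m j) j)
    rw [← hswap, card_range] at htotal
    have := two_pow_pred_eq_two_mul hk
    omega
  rw [sum_ite, sum_const, sum_const, ← hswap, hhalf, smul_eq_mul, smul_eq_mul, mul_add]

lemma sum_card_Bline {k : ℕ} (hk : 2 ≤ k) :
    ∑ m ∈ range (2 ^ (k - 1)), #(Bline k m) = k * (2 ^ (k - 2) * (k / 2 + 2)) := by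
  calc ∑ m ∈ range (2 ^ (k - 1)), #(Bline k m)
      = ∑ j ∈ range k, ∑ m ∈ range (2 ^ (k - 1)),
          if dark (ell m j) j then k / 2 + 1 else 1 := by
        rw [sum_comm]
        refine sum_congr rfl fun m _ => ?_
        rw [card_Bline]
        exact sum_congr rfl fun j _ => card_Bset (by omega) _ _
    _ = ∑ j ∈ range k, 2 ^ (k - 2) * (k / 2 + 2) :=
        sum_congr rfl fun j hj => sum_range_ite_dark_ell hk (mem_range.mp hj) _ _
    _ = k * (2 ^ (k - 2) * (k / 2 + 2)) := by rw [sum_const, card_range, smul_eq_mul]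

lemma sum_card_filter_mem_Bline (k : ℕ) :
    ∑ i ∈ range (2 ^ (k - 1)), ∑ j ∈ range k, #{m ∈ range (2 ^ (k - 1)) | (i, j) ∈ Bline k m}
      = ∑ m ∈ range (2 ^ (k - 1)), #(Bline k m) := by
  rw [← sum_product (range (2 ^ (k - 1))) (range k)
      (fun p => #{m ∈ range (2 ^ (k - 1)) | p ∈ Bline k m})]
  refine (sum_card_bipartiteAbove_eq_sum_card_bipartiteBelow (fun p m => p ∈ Bline k m)).trans
    (sum_congr rfl fun m hm => ?_)
  rw [bipartiteBelow, filter_mem_eq_inter,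
    inter_eq_right.mpr (Bline_subset_range_product (mem_range.mp hm))]

theorem expected_update_measure_general (k : ℕ) (hk : 3 ≤ k) :
    ∑ i ∈ Finset.range (2 ^ (k - 1)), ∑ j ∈ Finset.range k, ucount k i j
      = k * 2 ^ (k - 2) * (k / 2 + 4) := by
  simp only [ucount, sum_add_distrib, sum_const, card_range, smul_eq_mul, mul_one]
  rw [sum_card_filter_mem_Bline, sum_card_Bline (by omega), two_pow_pred_eq_two_mul (by omega)]
  ring

/-- Expected update measure: the total update count over all information elements is
`k · 2^(k-2) · (⌊k/2⌋ + 4)`, i.e. the average is `⌊k/2⌋/2 + 2`. -/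
theorem expected_update_measure (k : ℕ) (hk : 3 ≤ k) (hodd : Odd k) :
    ∑ i ∈ Finset.range (2 ^ (k - 1)), ∑ j ∈ Finset.range k, ucount k i j
      = k * 2 ^ (k - 2) * (k / 2 + 4) :=
  expected_update_measure_general k hk
end

section
/- (Per-element update count formula) Let k ≥ 3 be odd, i ∈ {0,…,2^{k−1}−1} and j ∈ {0,…,k−1}. Then |{m ∈ {0,…,2^{k−1}−1} : (i,j) ∈ B_m}| = 1 + |{j′ ∈ {0,…,k−1} : j′ ≠ j, i(j′) = i(j′−1), and (j′ − j) mod k ≤ ⌊k/2⌋}|. -/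
lemma ell_ell (i j : ℕ) : ell (ell i j) j = i := by
  simp [ell, Nat.xor_assoc]

lemma ell_inj (i : ℕ) : Function.Injective (ell i) := by
  intro a b h
  have : 2 ^ a - 1 = 2 ^ b - 1 := Nat.xor_right_injective h
  have h2 : 2 ^ a = 2 ^ b := by
    have ha : 1 ≤ 2 ^ a := Nat.one_le_two_pow
    have hb : 1 ≤ 2 ^ b := Nat.one_le_two_pow
    omega
  exact Nat.pow_right_injective (by norm_num) h2

lemma mem_Bset_iff (k l j' i j : ℕ) :
    (i, j) ∈ Bset k l j' ↔ i = l ∧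
      ((dark l j' ∧ j < k ∧ ((j' : ℤ) - (j : ℤ)) % (k : ℤ) ≤ ((k / 2 : ℕ) : ℤ))
        ∨ (¬ dark l j' ∧ j = j')) := by
  unfold Bset
  split_ifs with hd
  · simp only [Finset.mem_image, Finset.mem_filter, Finset.mem_range, Prod.mk.injEq]
    constructor
    · rintro ⟨a, ⟨ha, hc⟩, hl, hj⟩
      subst hj
      exact ⟨hl.symm, Or.inl ⟨hd, ha, hc⟩⟩
    · rintro ⟨hl, h | h⟩
      · exact ⟨j, ⟨h.2.1, h.2.2⟩, hl.symm, rfl⟩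
      · exact absurd hd h.1
  · simp only [Finset.mem_singleton, Prod.mk.injEq]
    tauto

/-- Per-element update count formula: the number of butterfly elements containing `(i,j)`
is one plus the number of `j' ≠ j` with `i(j') = i(j'-1)` and `(j' - j) mod k ≤ ⌊k/2⌋`. -/
theorem per_element_update_count
    (k : ℕ) (hk : 3 ≤ k) (hodd : Odd k)
    (i j : ℕ) (hi : i < 2 ^ (k - 1)) (hj : j < k) :
    ((Finset.range (2 ^ (k - 1))).filter (fun m => (i, j) ∈ Bline k m)).card
      = 1 + ((Finset.range k).filter (fun j' =>
          j' ≠ j ∧ dark i j' ∧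
          ((j' : ℤ) - (j : ℤ)) % (k : ℤ) ≤ ((k / 2 : ℕ) : ℤ))).card := by
  set S := (Finset.range k).filter (fun j' =>
          j' ≠ j ∧ dark i j' ∧
          ((j' : ℤ) - (j : ℤ)) % (k : ℤ) ≤ ((k / 2 : ℕ) : ℤ)) with hS
  have hkpos : (0 : ℤ) < (k : ℤ) := by exact_mod_cast Nat.lt_of_lt_of_le (by norm_num) hk
  have hell_lt : ∀ j', j' < k → ell i j' < 2 ^ (k - 1) := by
    intro j' hj'
    refine Nat.xor_lt_two_pow hi ?_
    have : 2 ^ j' ≤ 2 ^ (k - 1) := Nat.pow_le_pow_right (by norm_num) (by omega)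
    have : 1 ≤ 2 ^ j' := Nat.one_le_two_pow
    omega
  have key : (Finset.range (2 ^ (k - 1))).filter (fun m => (i, j) ∈ Bline k m)
      = (insert j S).image (ell i) := by
    ext m
    simp only [Finset.mem_filter, Finset.mem_range, Finset.mem_image, Finset.mem_insert,
      Bline, Finset.mem_biUnion, hS]
    constructor
    · rintro ⟨hm, j', hj', hmem⟩
      rw [mem_Bset_iff] at hmem
      obtain ⟨hil, hcond⟩ := hmem
      have hmval : m = ell i j' := by
        have : ell m j' = i := hil.symm
        rw [← this, ell_ell]
      refine ⟨j', ?_, hmval.symm⟩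
      rcases hcond with ⟨hd, _, hc⟩ | ⟨_, hjj⟩
      · by_cases hje : j' = j
        · exact Or.inl hje
        · refine Or.inr ⟨hj', hje, ?_, hc⟩
          rw [hil]; exact hd
      · exact Or.inl hjj.symm
    · rintro ⟨j', hj', rfl⟩
      have hj'k : j' < k := by
        rcases hj' with rfl | h
        · exact hj
        · exact h.1
      refine ⟨hell_lt j' hj'k, j', hj'k, ?_⟩
      rw [mem_Bset_iff, ell_ell]
      refine ⟨rfl, ?_⟩
      rcases hj' with rfl | h
      · by_cases hd : dark i j'
        · refine Or.inl ⟨hd, hj'k, ?_⟩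
          simp only [sub_self, Int.zero_emod]
          exact_mod_cast Int.ofNat_nonneg (k / 2)
        · exact Or.inr ⟨hd, rfl⟩
      · obtain ⟨_, _, hd, hc⟩ := h
        exact Or.inl ⟨hd, hj, hc⟩
  rw [key, Finset.card_image_of_injective _ (ell_inj i),
    Finset.card_insert_of_notMem (by simp [hS]), add_comm]
end
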